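/- Removing Log and Empty rules from a chain preserves the semantics: ⟨filter (λ(m,a). a ≠ Log ∧ a ≠ Empty) rs, t⟩ ⇒ t' if and only if ⟨rs, t⟩ ⇒ t'. -/
import Mathlib


inductive FAction (χ : Type) where
  | accept | drop | reject | log | empty | call (c : χ) | ret
deriving DecidableEq

inductive FState where
  | undecided | allow | deny
deriving DecidableEq

inductive MExpr (X : Type) where
  | prim (x : X) | neg (m : MExpr X) | and (m₁ m₂ : MExpr X) | tt
deriving DecidableEq

/-- Lifting of a Boolean primitive matcher to match expressions. -/
def mmatch {X P : Type} (γ : X → P → Bool) (p : P) : MExpr X → Bool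
  | .prim x => γ x p
  | .neg m => !(mmatch γ p m)
  | .and m₁ m₂ => mmatch γ p m₁ && mmatch γ p m₂
  | .tt => true

abbrev Rule (X χ : Type) := MExpr X × FAction χ

/-- Big-step semantics for iptables. -/
inductive Bigstep {X P χ : Type} (Γ : χ → List (Rule X χ)) (γ : X → P → Bool) (p : P) :
    List (Rule X χ) → FState → FState → Prop where
  | skip (t) : Bigstep Γ γ p [] t t
  | accept {m} (h : mmatch γ p m = true) :
      Bigstep Γ γ p [(m, .accept)] .undecided .allow
  | drop {m} (h : mmatch γ p m = true) :
      Bigstep Γ γ p [(m, .drop)] .undecided .deny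
  | reject {m} (h : mmatch γ p m = true) :
      Bigstep Γ γ p [(m, .reject)] .undecided .deny
  | nomatch {m a} (h : mmatch γ p m = false) :
      Bigstep Γ γ p [(m, a)] .undecided .undecided
  | decision {rs t} (h : t ≠ FState.undecided) : Bigstep Γ γ p rs t t
  | seq {rs₁ rs₂ t t'} (h₁ : Bigstep Γ γ p rs₁ .undecided t)
      (h₂ : Bigstep Γ γ p rs₂ t t') : Bigstep Γ γ p (rs₁ ++ rs₂) .undecided t'
  | callResult {m c t} (h : mmatch γ p m = true)
      (hc : Bigstep Γ γ p (Γ c) .undecided t) :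
      Bigstep Γ γ p [(m, .call c)] .undecided t
  | callReturn {m c m' rs₁ rs₂} (h : mmatch γ p m = true)
      (hΓ : Γ c = rs₁ ++ (m', FAction.ret) :: rs₂) (h' : mmatch γ p m' = true)
      (hrs₁ : Bigstep Γ γ p rs₁ .undecided .undecided) :
      Bigstep Γ γ p [(m, .call c)] .undecided .undecided
  | log {m} (h : mmatch γ p m = true) :
      Bigstep Γ γ p [(m, .log)] .undecided .undecided
  | empty {m} (h : mmatch γ p m = true) :
      Bigstep Γ γ p [(m, .empty)] .undecided .undecided

namespace Bigstep

variable {X P χ : Type} {Γ : χ → List (Rule X χ)} {γ : X → P → Bool} {p : P}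

theorem start_decided {rs : List (Rule X χ)} {t t' : FState}
    (h : Bigstep Γ γ p rs t t') (ht : t ≠ FState.undecided) : t' = t := by
  cases h <;> first | rfl | exact absurd rfl ht

theorem comp {rs₁ rs₂ : List (Rule X χ)} {t t'' t' : FState}
    (h₁ : Bigstep Γ γ p rs₁ t t'') (h₂ : Bigstep Γ γ p rs₂ t'' t') :
    Bigstep Γ γ p (rs₁ ++ rs₂) t t' := by
  by_cases ht : t = FState.undecided
  · subst ht; exact .seq h₁ h₂
  · have e₁ := h₁.start_decided ht
    subst e₁
    have e₂ := h₂.start_decided ht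
    subst e₂
    exact .decision ht

theorem decomp {rs : List (Rule X χ)} {t t' : FState}
    (h : Bigstep Γ γ p rs t t') :
    ∀ rs₁ rs₂, rs = rs₁ ++ rs₂ →
      ∃ t'', Bigstep Γ γ p rs₁ t t'' ∧ Bigstep Γ γ p rs₂ t'' t' := by
  induction h with
  | skip t =>
    intro rs₁ rs₂ he
    obtain ⟨h1, h2⟩ := List.append_eq_nil_iff.mp he.symm
    subst h1; subst h2
    exact ⟨t, .skip t, .skip t⟩
  | decision ht =>
    intro rs₁ rs₂ he
    exact ⟨_, .decision ht, .decision ht⟩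
  | seq h₁ h₂ ih₁ ih₂ =>
    intro l₁ l₂ he
    rcases List.append_eq_append_iff.mp he with ⟨a', ha, hb⟩ | ⟨c', ha, hb⟩
    · obtain ⟨s, hs1, hs2⟩ := ih₂ a' l₂ hb
      exact ⟨s, by rw [ha]; exact comp h₁ hs1, hs2⟩
    · obtain ⟨s, hs1, hs2⟩ := ih₁ l₁ c' ha
      exact ⟨s, hs1, by rw [hb]; exact comp hs2 h₂⟩
  | _ =>
    intro rs₁ rs₂ he
    first
    | (rcases List.append_eq_cons_iff.mp he.symm with ⟨h1, h2⟩ | ⟨l, h1, h2⟩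
       · subst h1; subst h2
         refine ⟨_, .skip _, ?_⟩
         first
         | exact .accept ‹_›
         | exact .drop ‹_›
         | exact .reject ‹_›
         | exact .nomatch ‹_›
         | exact .callResult ‹_› ‹_›
         | exact .callReturn ‹_› ‹_› ‹_› ‹_›
         | exact .log ‹_›
         | exact .empty ‹_›
       · obtain ⟨ha, hb⟩ := List.append_eq_nil_iff.mp h2.symm
         subst ha; subst h1; subst hb
         refine ⟨_, ?_, .skip _⟩
         first
         | exact .accept ‹_›
         | exact .drop ‹_›
         | exact .reject ‹_›
         | exact .nomatch ‹_›
         | exact .callResult ‹_› ‹_›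
         | exact .callReturn ‹_› ‹_› ‹_› ‹_›
         | exact .log ‹_›
         | exact .empty ‹_›)

theorem log_empty_id {rs : List (Rule X χ)} {t t' : FState}
    (h : Bigstep Γ γ p rs t t')
    (hr : ∀ r ∈ rs, r.2 = FAction.log ∨ r.2 = FAction.empty) : t' = t := by
  induction h with
  | seq h₁ h₂ ih₁ ih₂ =>
    rw [ih₂ fun r hrr => hr r (List.mem_append_right _ hrr),
        ih₁ fun r hrr => hr r (List.mem_append_left _ hrr)]
  | _ => first | rfl | simp_all

theorem log_empty_skip {m : MExpr X} {a : FAction χ} {t : FState}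
    (ha : a = FAction.log ∨ a = FAction.empty) :
    Bigstep Γ γ p [(m, a)] t t := by
  by_cases ht : t = FState.undecided
  · subst ht
    cases hm : mmatch γ p m with
    | false => exact .nomatch hm
    | true =>
      rcases ha with ha | ha <;> subst ha
      · exact .log hm
      · exact .empty hm
  · exact .decision ht

end Bigstep

/-- Removing `Log` and `Empty` rules preserves the semantics. -/
theorem remove_log_empty {X P χ : Type} [DecidableEq χ] (Γ : χ → List (Rule X χ))
    (γ : X → P → Bool) (p : P) (rs : List (Rule X χ)) (t t' : FState) :
    Bigstep Γ γ p
      (rs.filter (fun r => decide (r.2 ≠ FAction.log ∧ r.2 ≠ FAction.empty))) t t' ↔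
    Bigstep Γ γ p rs t t' := by
  induction rs generalizing t with
  | nil => simp
  | cons r rs ih =>
    by_cases hk : r.2 ≠ FAction.log ∧ r.2 ≠ FAction.empty
    · rw [List.filter_cons_of_pos (by simpa using hk)]
      constructor
      · intro h
        obtain ⟨s, h1, h2⟩ := h.decomp [r] _ rfl
        exact (Bigstep.comp h1 ((ih s).mp h2) : Bigstep Γ γ p ([r] ++ rs) t t')
      · intro h
        obtain ⟨s, h1, h2⟩ := h.decomp [r] rs rfl
        exact (Bigstep.comp h1 ((ih s).mpr h2) :
          Bigstep Γ γ p ([r] ++ _) t t')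
    · have ha : r.2 = FAction.log ∨ r.2 = FAction.empty := by tauto
      rw [List.filter_cons_of_neg (by simp; tauto)]
      rw [ih]
      constructor
      · intro h
        obtain ⟨m, a⟩ := r
        exact (Bigstep.comp (Bigstep.log_empty_skip ha) h :
          Bigstep Γ γ p ([(m, a)] ++ rs) t t')
      · intro h
        obtain ⟨s, h1, h2⟩ := h.decomp [r] rs rfl
        have := h1.log_empty_id (by simpa using ha)
        subst this
        exact h2
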